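/- Let f : ℂ → ℂ be a complex polynomial with f(0) = 0 of multiplicity k ≥ 2 at the origin. Define G_t(z) = −2i(f'(z))² conj(f''(z)) + 2ti(a+ib) f''(z) conj(f'(z)), and H_t(z) = −2i·(∂G_t/∂z)(z)·(∂J/∂z̄)(z) + 2i·(∂G_t/∂z̄)(z)·(∂J/∂z)(z) where J(z) = |f'(z)|² − t²(a²+b²). If z satisfies G_t(z) = 0 and H_t(z) = 0, then (f'(z))²·conj(f'(z))·ψ(z) = 0, where ψ(z) = 3|f''(z)|⁴ − (f''(z))²·conj(f'(z)·f'''(z)) − conj(f''(z))²·f'(z)·f'''(z). -/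

import Mathlib

open Complex

noncomputable section

def d1 (f : Polynomial ℂ) (z : ℂ) : ℂ := f.derivative.eval z
def d2 (f : Polynomial ℂ) (z : ℂ) : ℂ := f.derivative.derivative.eval z
def d3 (f : Polynomial ℂ) (z : ℂ) : ℂ := f.derivative.derivative.derivative.eval z

/-- `G_t(z) = −2i(f'(z))² conj(f''(z)) + 2ti(a+ib) f''(z) conj(f'(z))`. -/
def Gt (f : Polynomial ℂ) (a b t : ℝ) (z : ℂ) : ℂ :=
  -2 * Complex.I * (d1 f z) ^ 2 * (starRingEnd ℂ) (d2 f z) +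
    2 * t * Complex.I * (a + Complex.I * b) * d2 f z * (starRingEnd ℂ) (d1 f z)

/-- Wirtinger derivative `∂G_t/∂z`, computed as a mixed polynomial in `z` and `z̄`. -/
def GtDz (f : Polynomial ℂ) (a b t : ℝ) (z : ℂ) : ℂ :=
  -4 * Complex.I * d1 f z * d2 f z * (starRingEnd ℂ) (d2 f z) +
    2 * t * Complex.I * (a + Complex.I * b) * d3 f z * (starRingEnd ℂ) (d1 f z)

/-- Wirtinger derivative `∂G_t/∂z̄`, computed as a mixed polynomial in `z` and `z̄`. -/
def GtDzbar (f : Polynomial ℂ) (a b t : ℝ) (z : ℂ) : ℂ :=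
  -2 * Complex.I * (d1 f z) ^ 2 * (starRingEnd ℂ) (d3 f z) +
    2 * t * Complex.I * (a + Complex.I * b) * d2 f z * (starRingEnd ℂ) (d2 f z)

/-- `∂J/∂z = f''(z) conj(f'(z))`. -/
def JDz (f : Polynomial ℂ) (z : ℂ) : ℂ := d2 f z * (starRingEnd ℂ) (d1 f z)

/-- `∂J/∂z̄ = conj(f''(z)) f'(z)`. -/
def JDzbar (f : Polynomial ℂ) (z : ℂ) : ℂ := (starRingEnd ℂ) (d2 f z) * d1 f z

/-- `H_t = −2i (∂G_t/∂z)(∂J/∂z̄) + 2i (∂G_t/∂z̄)(∂J/∂z)`. -/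
def Ht (f : Polynomial ℂ) (a b t : ℝ) (z : ℂ) : ℂ :=
  -2 * Complex.I * GtDz f a b t z * JDzbar f z + 2 * Complex.I * GtDzbar f a b t z * JDz f z

/-- `ψ(z) = 3|f''|⁴ − (f'')² conj(f' f''') − conj(f'')² f' f'''`. -/
def psi (f : Polynomial ℂ) (z : ℂ) : ℂ :=
  3 * ((‖d2 f z‖ : ℝ) : ℂ) ^ 4 -
    (d2 f z) ^ 2 * (starRingEnd ℂ) (d1 f z * d3 f z) -
    ((starRingEnd ℂ) (d2 f z)) ^ 2 * d1 f z * d3 f z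

/-!
Write `A, B, C` for `f', f'', f'''` at `z`, primes for their conjugates, and `w = t(a + ib)`.
Since `i² = -1`, `G_t = -2i g` and `H_t = -4h` for the mixed polynomials
`g = A²B' - wA'B` and `h = 2A²BB'² - wAA'B'C - A²A'BC' + wA'B²B'`, and `A²A'ψ` lies in the
ideal they generate: `A²A'ψ = A'B'(B² - AC) g + A'B h`.
-/

open ComplexConjugate

theorem sq_mul_mul_eq_zero_of_eq_zero {R : Type*} [CommRing R] {A A' B B' C C' w : R}
    (hg : A ^ 2 * B' - w * A' * B = 0)
    (hh : 2 * A ^ 2 * B * B' ^ 2 - w * A * A' * B' * C - A ^ 2 * A' * B * C'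
      + w * A' * B ^ 2 * B' = 0) :
    A ^ 2 * A' * (3 * B ^ 2 * B' ^ 2 - B ^ 2 * (A' * C') - B' ^ 2 * A * C) = 0 := by
  linear_combination A' * B' * (B ^ 2 - A * C) * hg + A' * B * hh

section

variable (f : Polynomial ℂ) (a b t : ℝ) (z : ℂ)

theorem Gt_eq_neg_two_I_mul :
    Gt f a b t z = -2 * I * (d1 f z ^ 2 * conj (d2 f z)
      - t * (a + I * b) * conj (d1 f z) * d2 f z) := by
  unfold Gt
  ring

theorem Ht_eq_neg_four_mul :
    Ht f a b t z = -4 * (2 * d1 f z ^ 2 * d2 f z * conj (d2 f z) ^ 2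
      - t * (a + I * b) * d1 f z * conj (d1 f z) * conj (d2 f z) * d3 f z
      - d1 f z ^ 2 * conj (d1 f z) * d2 f z * conj (d3 f z)
      + t * (a + I * b) * conj (d1 f z) * d2 f z ^ 2 * conj (d2 f z)) := by
  unfold Ht GtDz GtDzbar JDz JDzbar
  linear_combination (8 * d1 f z ^ 2 * d2 f z * conj (d2 f z) ^ 2
    - 4 * t * (a + I * b) * d1 f z * conj (d1 f z) * conj (d2 f z) * d3 f z
    - 4 * d1 f z ^ 2 * conj (d1 f z) * d2 f z * conj (d3 f z)
    + 4 * t * (a + I * b) * conj (d1 f z) * d2 f z ^ 2 * conj (d2 f z)) * I_sq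

theorem psi_eq :
    psi f z = 3 * d2 f z ^ 2 * conj (d2 f z) ^ 2
      - d2 f z ^ 2 * (conj (d1 f z) * conj (d3 f z)) - conj (d2 f z) ^ 2 * d1 f z * d3 f z := by
  have hnorm : ((‖d2 f z‖ : ℝ) : ℂ) ^ 2 = d2 f z * conj (d2 f z) := by
    rw [mul_conj, ← ofReal_pow, Complex.sq_norm]
  rw [psi, map_mul, show (4 : ℕ) = 2 * 2 from rfl, pow_mul, hnorm]
  ring

end

theorem psi_vanishes_on_common_zeros_general (f : Polynomial ℂ)
    (a b t : ℝ) (z : ℂ) (hG : Gt f a b t z = 0) (hH : Ht f a b t z = 0) :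
    (d1 f z) ^ 2 * (starRingEnd ℂ) (d1 f z) * psi f z = 0 := by
  rw [Gt_eq_neg_two_I_mul, mul_eq_zero] at hG
  rw [Ht_eq_neg_four_mul, mul_eq_zero] at hH
  rw [psi_eq]
  refine sq_mul_mul_eq_zero_of_eq_zero (hG.resolve_left ?_) (hH.resolve_left (by norm_num))
  simp [I_ne_zero]

theorem psi_vanishes_on_common_zeros (f : Polynomial ℂ) (k : ℕ) (hk : 2 ≤ k)
    (h0 : f.eval 0 = 0) (hmult : f.rootMultiplicity 0 = k)
    (a b t : ℝ) (z : ℂ) (hG : Gt f a b t z = 0) (hH : Ht f a b t z = 0) :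
    (d1 f z) ^ 2 * (starRingEnd ℂ) (d1 f z) * psi f z = 0 :=
  psi_vanishes_on_common_zeros_general f a b t z hG hH

end
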